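/- arXiv:math/0609233 — 2 statements merged into one kernel-verified Lean document; each statement's English description precedes it below -/
import Mathlib

section
/- Let a, b be coprime positive integers with a ≤ b, and a', b' coprime positive integers with a' ≤ b', such that a*b = a'*b'. Let m be an integer with m ≡ -1 (mod 2a) and m ≡ 1 (mod 2b), and let m' be an integer with m' ≡ -1 (mod 2a') and m' ≡ 1 (mod 2b'). If m ≡ m' (mod 2ab) or m ≡ -m' (mod 2ab), then a = a' and b = b'. -/
/-! Write `m = 2u - 1`. The Mukai congruences say `a ∣ u` and `b ∣ u - 1`, so `u` is coprime to
`b` and `1 - u` is coprime to `a`; hence `gcd(u, ab) = a` and `gcd(1 - u, ab) = b`. The class of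
`m` modulo `2ab` is the class of `u` modulo `ab`, and `m ↦ -m` corresponds to `u ↦ 1 - u`, which
swaps the two gcds. So `m ≡ ±m'` recovers `(a, b)` or `(b, a)`, and `a ≤ b` rules out the swap
unless `a = b`. -/

theorem Int.ModEq.gcd_eq {n a b : ℤ} (h : a ≡ b [ZMOD n]) : Int.gcd a n = Int.gcd b n := by
  rw [← Int.gcd_emod, h, Int.gcd_emod]

theorem Int.ModEq.of_two_mul_sub_one {n u v : ℤ} (h : 2 * u - 1 ≡ 2 * v - 1 [ZMOD 2 * n]) :
    u ≡ v [ZMOD n] :=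
  Int.ModEq.mul_left_cancel' two_ne_zero (Int.ModEq.add_right_cancel' (-1) h)

theorem Int.gcd_mul_eq_natAbs_of_dvd_of_dvd_sub_one {a b u : ℤ} (ha : a ∣ u) (hb : b ∣ u - 1) :
    Int.gcd u (a * b) = a.natAbs := by
  obtain ⟨k, hk⟩ := hb
  have hcop : Nat.Coprime b.natAbs u.natAbs :=
    Int.isCoprime_iff_gcd_eq_one.mp ⟨-k, 1, by linear_combination hk⟩
  rw [Int.gcd, Int.natAbs_mul, Nat.Coprime.gcd_mul_right_cancel_right _ hcop]
  exact Nat.gcd_eq_right (Int.natAbs_dvd_natAbs.mpr ha)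

def IsMukaiElement (a b m : ℤ) : Prop :=
  m ≡ -1 [ZMOD 2 * a] ∧ m ≡ 1 [ZMOD 2 * b]

theorem IsMukaiElement.exists_eq_two_mul_sub_one {a b m : ℤ} (h : IsMukaiElement a b m) :
    ∃ u, m = 2 * u - 1 ∧ a ∣ u ∧ b ∣ u - 1 := by
  obtain ⟨k, hk⟩ := h.1.dvd
  obtain ⟨l, hl⟩ := h.2.dvd
  refine ⟨-(a * k), by linear_combination -hk, ⟨-k, by ring⟩, ⟨-l, ?_⟩⟩
  exact mul_left_cancel₀ two_ne_zero (by linear_combination hk - hl)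

theorem IsMukaiElement.exists_gcd_eq {a b : ℕ} {m : ℤ} (h : IsMukaiElement a b m) :
    ∃ u, m = 2 * u - 1 ∧ Int.gcd u (a * b) = a ∧ Int.gcd (1 - u) (a * b) = b := by
  obtain ⟨u, rfl, hau, hbu⟩ := h.exists_eq_two_mul_sub_one
  refine ⟨u, rfl, Int.gcd_mul_eq_natAbs_of_dvd_of_dvd_sub_one hau hbu, ?_⟩
  rw [mul_comm]
  exact Int.gcd_mul_eq_natAbs_of_dvd_of_dvd_sub_one (by simpa using hbu.neg_right)
    (by simpa using hau.neg_right)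

theorem mukai_element_recovers_pair_general (a b a' b' : ℕ)
    (hle : a ≤ b) (hle' : a' ≤ b')
    (hprod : a * b = a' * b') (m m' : ℤ)
    (hm1 : m ≡ -1 [ZMOD (2 * a)]) (hm2 : m ≡ 1 [ZMOD (2 * b)])
    (hm'1 : m' ≡ -1 [ZMOD (2 * a')]) (hm'2 : m' ≡ 1 [ZMOD (2 * b')])
    (hmm : m ≡ m' [ZMOD (2 * a * b)] ∨ m ≡ -m' [ZMOD (2 * a * b)]) :
    a = a' ∧ b = b' := by
  obtain ⟨u, rfl, hua, hub⟩ := IsMukaiElement.exists_gcd_eq ⟨hm1, hm2⟩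
  obtain ⟨u', rfl, hua', hub'⟩ := IsMukaiElement.exists_gcd_eq ⟨hm'1, hm'2⟩
  have hprodZ : (a' : ℤ) * b' = a * b := by exact_mod_cast hprod.symm
  rw [hprodZ] at hua' hub'
  rw [mul_assoc] at hmm
  rcases hmm with h | h
  · have huu := Int.ModEq.of_two_mul_sub_one h
    have huu' : 1 - u ≡ 1 - u' [ZMOD a * b] := huu.sub_left 1
    exact ⟨hua.symm.trans (huu.gcd_eq.trans hua'), hub.symm.trans (huu'.gcd_eq.trans hub')⟩
  · have huu : u ≡ 1 - u' [ZMOD a * b] :=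
      Int.ModEq.of_two_mul_sub_one (by rwa [show 2 * (1 - u') - 1 = -(2 * u' - 1) by ring])
    have huu' : 1 - u ≡ u' [ZMOD a * b] := by simpa using huu.sub_left 1
    have ha_eq : a = b' := hua.symm.trans (huu.gcd_eq.trans hub')
    have hb_eq : b = a' := hub.symm.trans (huu'.gcd_eq.trans hua')
    omega

/-- A coprime ordered pair `(a, b)` with `a ≤ b` is recovered from the product `ab`
and the class of its Mukai element modulo `2ab`, up to sign. -/
theorem mukai_element_recovers_pair (a b a' b' : ℕ)
    (ha : 0 < a) (hb : 0 < b) (hab : Nat.Coprime a b) (hle : a ≤ b)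
    (ha' : 0 < a') (hb' : 0 < b') (hab' : Nat.Coprime a' b') (hle' : a' ≤ b')
    (hprod : a * b = a' * b') (m m' : ℤ)
    (hm1 : m ≡ -1 [ZMOD (2 * a)]) (hm2 : m ≡ 1 [ZMOD (2 * b)])
    (hm'1 : m' ≡ -1 [ZMOD (2 * a')]) (hm'2 : m' ≡ 1 [ZMOD (2 * b')])
    (hmm : m ≡ m' [ZMOD (2 * a * b)] ∨ m ≡ -m' [ZMOD (2 * a * b)]) :
    a = a' ∧ b = b' :=
  mukai_element_recovers_pair_general a b a' b' hle hle' hprod m m' hm1 hm2 hm'1 hm'2 hmm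
end

section
/- For all integers k, t, x, y, the value 5*x² + 65*k*x*y + 13*t*y² is never equal to 1 and never equal to -1. -/
lemma aux_5_13 : ∀ a : ZMod 13, 5 * a ^ 2 ≠ 1 ∧ 5 * a ^ 2 ≠ -1 := by decide

/-- a-series non-solvability for the Mukai vector type `(5, H, 13)` with `γ = 65`:
the form `5x² + 65kxy + 13ty²` never represents `±1`. -/
theorem a_series_unsolvable_5_13 (k t x y : ℤ) :
    5 * x ^ 2 + 65 * k * x * y + 13 * t * y ^ 2 ≠ 1 ∧
    5 * x ^ 2 + 65 * k * x * y + 13 * t * y ^ 2 ≠ -1 := by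
  constructor <;> intro h <;> have h13 := congrArg (Int.cast : ℤ → ZMod 13) h <;>
    push_cast at h13 <;>
    simp only [show ((13 : ZMod 13) = 0) by decide, show ((65 : ZMod 13) = 0) by decide] at h13 <;>
    ring_nf at h13
  · exact (aux_5_13 (x : ZMod 13)).1 (by linear_combination h13)
  · exact (aux_5_13 (x : ZMod 13)).2 (by linear_combination h13)
end
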